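/- In the setting of a separability idempotent E ∈ B⊗C (B, C unital) with antipodal anti-homomorphisms S_B, S_C and distinguished functionals φ_B : B → ℂ, φ_C : C → ℂ satisfying (φ_B⊗id)(E) = 1_C and (id⊗φ_C)(E) = 1_B, the linear functional ε_P on P = C⊗B defined by ε_P(c⊗b) = φ_C(c·S_B(b)) is a right counit for Δ_P(c⊗b) = c⊗E⊗b: (id_P ⊗ ε_P)(Δ_P(c⊗b)) = c⊗b for all b ∈ B, c ∈ C. -/

import Mathlib

/-! Applying `id ⊗ ε_P` to `Δ_P(c ⊗ b) = c ⊗ E ⊗ b` leaves `c ⊗ (id ⊗ φ_C)(E (1 ⊗ S_B b))`.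
The antipode relation turns `E (1 ⊗ S_B b)` into `E (b ⊗ 1)`, and since the slice map
`id ⊗ φ_C` is right `B`-linear this gives `(id ⊗ φ_C)(E) b = b`. -/

open scoped TensorProduct

variable (B C : Type*) [Ring B] [Algebra ℂ B] [Ring C] [Algebra ℂ C]

/-- The coproduct `Δ_P : C ⊗ B → (C ⊗ B) ⊗ (C ⊗ B)`, `c ⊗ b ↦ c ⊗ E ⊗ b`. -/
noncomputable def DeltaP (E : B ⊗[ℂ] C) :
    (C ⊗[ℂ] B) →ₗ[ℂ] (C ⊗[ℂ] B) ⊗[ℂ] (C ⊗[ℂ] B) :=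
  (TensorProduct.assoc ℂ (C ⊗[ℂ] B) C B).toLinearMap ∘ₗ
    (TensorProduct.congr ((TensorProduct.assoc ℂ C B C).symm)
      (LinearEquiv.refl ℂ B)).toLinearMap ∘ₗ
    (TensorProduct.assoc ℂ C (B ⊗[ℂ] C) B).symm.toLinearMap ∘ₗ
    TensorProduct.map LinearMap.id (TensorProduct.mk ℂ (B ⊗[ℂ] C) B E)

open TensorProduct

section Slice

variable {R A C' : Type*} [CommSemiring R] [Semiring A] [Algebra R A] [Semiring C'] [Algebra R C']

theorem TensorProduct.rid_map_id_mul_tmul_one (φ : C' →ₗ[R] R) (x : A ⊗[R] C') (a : A) :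
    TensorProduct.rid R A (map LinearMap.id φ (x * (a ⊗ₜ 1))) =
      TensorProduct.rid R A (map LinearMap.id φ x) * a := by
  induction x using TensorProduct.induction_on with
  | zero => simp
  | tmul a' c => simp [Algebra.TensorProduct.tmul_mul_tmul]
  | add x y hx hy => simp only [add_mul, map_add, hx, hy]

end Slice

theorem DeltaP_tmul_apply_tmul (b' : B) (c' : C) (c : C) (b : B) :
    DeltaP B C (b' ⊗ₜ c') (c ⊗ₜ b) = (c ⊗ₜ b') ⊗ₜ (c' ⊗ₜ b) := by
  simp [DeltaP]

theorem DeltaP_add (x y : B ⊗[ℂ] C) : DeltaP B C (x + y) = DeltaP B C x + DeltaP B C y := by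
  simp [DeltaP, map_add_right, LinearMap.comp_add]

theorem rid_map_id_DeltaP_tmul (SB : B →ₗ[ℂ] C) (phiC : C →ₗ[ℂ] ℂ) (epsP : (C ⊗[ℂ] B) →ₗ[ℂ] ℂ)
    (hepsP : ∀ (c : C) (b : B), epsP (c ⊗ₜ[ℂ] b) = phiC (c * SB b))
    (x : B ⊗[ℂ] C) (c : C) (b : B) :
    TensorProduct.rid ℂ (C ⊗[ℂ] B) (map LinearMap.id epsP (DeltaP B C x (c ⊗ₜ b))) =
      c ⊗ₜ TensorProduct.rid ℂ B (map LinearMap.id phiC (x * (1 ⊗ₜ SB b))) := by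
  induction x using TensorProduct.induction_on with
  | zero => simp [DeltaP]
  | tmul b' c' =>
    simp [DeltaP_tmul_apply_tmul, hepsP, Algebra.TensorProduct.tmul_mul_tmul, tmul_smul]
  | add x y hx hy => simp only [DeltaP_add, LinearMap.add_apply, add_mul, map_add, hx, hy, tmul_add]

theorem stmt10 (E : B ⊗[ℂ] C)
    (SB : B →ₗ[ℂ] C)
    (hSB : ∀ b : B, E * (b ⊗ₜ[ℂ] (1 : C)) = E * ((1 : B) ⊗ₜ[ℂ] SB b))
    (phiC : C →ₗ[ℂ] ℂ)
    (hphiC : (TensorProduct.rid ℂ B).toLinearMap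
        (TensorProduct.map LinearMap.id phiC E) = 1)
    (epsP : (C ⊗[ℂ] B) →ₗ[ℂ] ℂ)
    (hepsP : ∀ (c : C) (b : B), epsP (c ⊗ₜ[ℂ] b) = phiC (c * SB b)) :
    ∀ (c : C) (b : B),
      (TensorProduct.rid ℂ (C ⊗[ℂ] B)).toLinearMap
        (TensorProduct.map LinearMap.id epsP (DeltaP B C E (c ⊗ₜ[ℂ] b)))
        = c ⊗ₜ[ℂ] b := by
  intro c b
  rw [LinearEquiv.coe_coe] at hphiC ⊢
  rw [rid_map_id_DeltaP_tmul B C SB phiC epsP hepsP, ← hSB, rid_map_id_mul_tmul_one, hphiC,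
    one_mul]
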